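/- arXiv:quant-ph/0210077 — 4 statements merged into one kernel-verified Lean document; each statement's English description precedes it below -/
import Mathlib

section
/- Let V be a finite-dimensional complex inner product space and let H₁, H₂ : V →ₗ[ℂ] V be self-adjoint positive semidefinite operators with kernels N₁ = ker H₁ and N₂ = ker H₂. Suppose λ ≥ 0 is such that ⟪v, Hᵢ v⟫ ≥ λ‖v‖² for every v orthogonal to Nᵢ (i = 1,2), and suppose θ ∈ (0, π/2] is such that |⟪x, y⟫| ≤ cos θ for all unit vectors x ∈ N₁ and y ∈ N₂. Then for every unit vector δ ∈ V, ⟪δ, (H₁ + H₂) δ⟫ ≥ λ · sin²(θ/2); i.e. the minimal eigenvalue of H₁ + H₂ is at least λ sin²(θ/2). -/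
lemma geom_aux (a b p q d r c : ℝ) (h1 : a^2 + p^2 = 1) (h2 : b^2 + q^2 = 1)
    (h3 : d ≤ p + q) (h4 : d^2 = a^2 + b^2 - 2*r) (h5 : r ≤ a*b*c)
    (hc0 : 0 ≤ c) (hc1 : c ≤ 1) (hp : 0 ≤ p) (hq : 0 ≤ q) (hd : 0 ≤ d) :
    (1 - c)/2 ≤ p^2 + q^2 := by
  nlinarith [sq_nonneg (p-q), sq_nonneg (a-b), mul_nonneg hc0 (sq_nonneg (a-b)),
    sq_nonneg (p+q), mul_le_mul_of_nonneg_left h3 (add_nonneg hp hq)]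

lemma gap_bound {V : Type*} [NormedAddCommGroup V] [InnerProductSpace ℂ V]
    [FiniteDimensional ℂ V] (H : V →ₗ[ℂ] V) (hsa : H.IsSymmetric)
    (lam : ℝ)
    (hgap : ∀ v : V, (∀ u ∈ LinearMap.ker H, (inner ℂ u v : ℂ) = 0) →
      lam * ‖v‖ ^ 2 ≤ (inner ℂ v (H v) : ℂ).re)
    (δ : V) :
    lam * ‖δ - (Submodule.orthogonalProjectionOnto (LinearMap.ker H) δ : V)‖ ^ 2 ≤ (inner ℂ δ (H δ) : ℂ).re := by
  set K := LinearMap.ker H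
  set x : V := (Submodule.orthogonalProjectionOnto K δ : V) with hx
  have hxmem : x ∈ K := (Submodule.orthogonalProjectionOnto K δ).2
  have hxo : δ - x ∈ Kᗮ := K.sub_starProjection_mem_orthogonal δ
  have horth : ∀ u ∈ K, (inner ℂ u (δ - x) : ℂ) = 0 := fun u hu =>
    (Submodule.mem_orthogonal K (δ - x)).mp hxo u hu
  have hHx : H x = 0 := hxmem
  have hHδ : H δ = H (δ - x) := by rw [map_sub, hHx, sub_zero]
  have hsplit : (inner ℂ δ (H δ) : ℂ) = inner ℂ (δ - x) (H (δ - x)) := by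
    rw [hHδ]
    have h : (inner ℂ δ (H (δ - x)) : ℂ)
        = inner ℂ x (H (δ - x)) + inner ℂ (δ - x) (H (δ - x)) := by
      rw [← inner_add_left]; congr 1; abel
    rw [h, ← hsa x (δ - x), hHx, inner_zero_left, zero_add]
  rw [hsplit]
  exact hgap (δ - x) horth

lemma pyth_aux {V : Type*} [NormedAddCommGroup V] [InnerProductSpace ℂ V]
    [FiniteDimensional ℂ V] (K : Submodule ℂ V) (δ : V) :
    ‖(Submodule.orthogonalProjectionOnto K δ : V)‖^2 + ‖δ - (Submodule.orthogonalProjectionOnto K δ : V)‖^2 = ‖δ‖^2 := by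
  set x : V := (Submodule.orthogonalProjectionOnto K δ : V)
  have hxmem : x ∈ K := (Submodule.orthogonalProjectionOnto K δ).2
  have h0 : (inner ℂ x (δ - x) : ℂ) = 0 :=
    (Submodule.mem_orthogonal K (δ - x)).mp (K.sub_starProjection_mem_orthogonal δ) x hxmem
  have h := norm_add_sq (𝕜 := ℂ) x (δ - x)
  rw [h0] at h
  simp only [map_zero, mul_zero, add_zero] at h
  have hxx : x + (δ - x) = δ := by abel
  rw [hxx] at h
  linarith

/-- Kitaev's geometrical lemma: if `H₁, H₂` are self-adjoint positive semidefinite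
operators whose nonzero spectral parts are bounded below by `λ`, and the angle between
their kernels is at least `θ`, then `H₁ + H₂ ≥ λ sin²(θ/2)`. -/
theorem stmt_0 {V : Type*} [NormedAddCommGroup V] [InnerProductSpace ℂ V]
    [FiniteDimensional ℂ V]
    (H₁ H₂ : V →ₗ[ℂ] V)
    (h₁sa : H₁.IsSymmetric) (h₂sa : H₂.IsSymmetric)
    (h₁psd : ∀ v : V, 0 ≤ (inner ℂ v (H₁ v) : ℂ).re)
    (h₂psd : ∀ v : V, 0 ≤ (inner ℂ v (H₂ v) : ℂ).re)
    (lam : ℝ) (hlam : 0 ≤ lam)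
    (hgap₁ : ∀ v : V, (∀ u ∈ LinearMap.ker H₁, (inner ℂ u v : ℂ) = 0) →
      lam * ‖v‖ ^ 2 ≤ (inner ℂ v (H₁ v) : ℂ).re)
    (hgap₂ : ∀ v : V, (∀ u ∈ LinearMap.ker H₂, (inner ℂ u v : ℂ) = 0) →
      lam * ‖v‖ ^ 2 ≤ (inner ℂ v (H₂ v) : ℂ).re)
    (θ : ℝ) (hθ0 : 0 < θ) (hθ1 : θ ≤ Real.pi / 2)
    (hangle : ∀ x ∈ LinearMap.ker H₁, ∀ y ∈ LinearMap.ker H₂,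
      ‖x‖ = 1 → ‖y‖ = 1 → ‖(inner ℂ x y : ℂ)‖ ≤ Real.cos θ)
    (δ : V) (hδ : ‖δ‖ = 1) :
    lam * Real.sin (θ / 2) ^ 2 ≤ (inner ℂ δ ((H₁ + H₂) δ) : ℂ).re := by
  have hc0 : 0 ≤ Real.cos θ :=
    Real.cos_nonneg_of_mem_Icc ⟨by nlinarith [Real.pi_pos], hθ1⟩
  have hc1 : Real.cos θ ≤ 1 := Real.cos_le_one θ
  set K₁ := LinearMap.ker H₁ with hK₁
  set K₂ := LinearMap.ker H₂ with hK₂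
  set x : V := (Submodule.orthogonalProjectionOnto K₁ δ : V) with hx
  set y : V := (Submodule.orthogonalProjectionOnto K₂ δ : V) with hy
  have hxmem : x ∈ K₁ := (Submodule.orthogonalProjectionOnto K₁ δ).2
  have hymem : y ∈ K₂ := (Submodule.orthogonalProjectionOnto K₂ δ).2
  have hb1 := gap_bound H₁ h₁sa lam hgap₁ δ
  have hb2 := gap_bound H₂ h₂sa lam hgap₂ δ
  have hp1 : ‖x‖^2 + ‖δ - x‖^2 = 1 := by
    have := pyth_aux K₁ δ; rw [hδ] at this; simpa [hx] using this
  have hp2 : ‖y‖^2 + ‖δ - y‖^2 = 1 := by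
    have := pyth_aux K₂ δ; rw [hδ] at this; simpa [hy] using this
  -- angle bound on the inner product of the projections
  have hn : ‖(inner ℂ x y : ℂ)‖ ≤ ‖x‖ * ‖y‖ * Real.cos θ := by
    rcases eq_or_ne x 0 with h | h
    · rw [h]; simp only [inner_zero_left, norm_zero, zero_mul]; positivity
    rcases eq_or_ne y 0 with h' | h'
    · rw [h']; simp only [inner_zero_right, norm_zero, mul_zero, zero_mul]; positivity
    have hxn : (0:ℝ) < ‖x‖ := norm_pos_iff.mpr h
    have hyn : (0:ℝ) < ‖y‖ := norm_pos_iff.mpr h'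
    have hx' : ((‖x‖⁻¹ : ℝ) : ℂ) • x ∈ K₁ := K₁.smul_mem _ hxmem
    have hy' : ((‖y‖⁻¹ : ℝ) : ℂ) • y ∈ K₂ := K₂.smul_mem _ hymem
    have hx'n : ‖((‖x‖⁻¹ : ℝ) : ℂ) • x‖ = 1 := by
      rw [norm_smul]; simp [abs_of_pos (inv_pos.mpr hxn)]
      field_simp
    have hy'n : ‖((‖y‖⁻¹ : ℝ) : ℂ) • y‖ = 1 := by
      rw [norm_smul]; simp [abs_of_pos (inv_pos.mpr hyn)]
      field_simp
    have hb := hangle _ hx' _ hy' hx'n hy'n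
    have hinner : (inner ℂ (((‖x‖⁻¹ : ℝ) : ℂ) • x) (((‖y‖⁻¹ : ℝ) : ℂ) • y) : ℂ)
        = ((‖x‖⁻¹ * ‖y‖⁻¹ : ℝ) : ℂ) * inner ℂ x y := by
      rw [inner_smul_left, inner_smul_right, Complex.conj_ofReal]
      push_cast
      ring
    rw [hinner] at hb
    rw [norm_mul] at hb
    have : ‖((‖x‖⁻¹ * ‖y‖⁻¹ : ℝ) : ℂ)‖ = ‖x‖⁻¹ * ‖y‖⁻¹ := by
      rw [Complex.norm_real]
      exact abs_of_pos (by positivity)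
    rw [this] at hb
    calc ‖(inner ℂ x y : ℂ)‖ = (‖x‖ * ‖y‖) * (‖x‖⁻¹ * ‖y‖⁻¹ * ‖(inner ℂ x y : ℂ)‖) := by
          field_simp
      _ ≤ (‖x‖ * ‖y‖) * Real.cos θ := by
          apply mul_le_mul_of_nonneg_left hb (by positivity)
  have hr : (inner ℂ x y : ℂ).re ≤ ‖x‖ * ‖y‖ * Real.cos θ :=
    le_trans (Complex.re_le_norm _) hn
  have hsub : ‖x - y‖^2 = ‖x‖^2 - 2 * (inner ℂ x y : ℂ).re + ‖y‖^2 := by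
    have := norm_sub_sq (𝕜 := ℂ) x y
    simpa using this
  have htri : ‖x - y‖ ≤ ‖δ - x‖ + ‖δ - y‖ := by
    calc ‖x - y‖ = ‖(x - δ) + (δ - y)‖ := by rw [sub_add_sub_cancel]
      _ ≤ ‖x - δ‖ + ‖δ - y‖ := norm_add_le _ _
      _ = ‖δ - x‖ + ‖δ - y‖ := by rw [norm_sub_rev]
  have hg : (1 - Real.cos θ)/2 ≤ ‖δ - x‖^2 + ‖δ - y‖^2 :=
    geom_aux ‖x‖ ‖y‖ ‖δ - x‖ ‖δ - y‖ ‖x - y‖ ((inner ℂ x y : ℂ).re) (Real.cos θ)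
      hp1 hp2 htri (by linarith) (by nlinarith) hc0 hc1 (norm_nonneg _) (norm_nonneg _)
      (norm_nonneg _)
  have hsin : Real.sin (θ/2)^2 = (1 - Real.cos θ)/2 := by
    have h1 := Real.sin_sq_add_cos_sq (θ/2)
    have h2 := Real.cos_sq (θ/2)
    rw [show 2*(θ/2) = θ by ring] at h2
    linarith
  have hadd : (inner ℂ δ ((H₁ + H₂) δ) : ℂ).re
      = (inner ℂ δ (H₁ δ) : ℂ).re + (inner ℂ δ (H₂ δ) : ℂ).re := by
    simp [inner_add_right]
  rw [hsin, hadd]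
  calc lam * ((1 - Real.cos θ)/2) ≤ lam * (‖δ - x‖^2 + ‖δ - y‖^2) :=
        mul_le_mul_of_nonneg_left hg hlam
    _ = lam * ‖δ - x‖^2 + lam * ‖δ - y‖^2 := by ring
    _ ≤ _ := add_le_add hb1 hb2
end

section
/- Let V be a finite-dimensional complex inner product space and let N₁, N₂ ⊆ V be subspaces such that for some θ ∈ (0, π/2], |⟪x, y⟫| ≤ cos θ for all unit vectors x ∈ N₁ and y ∈ N₂. Then for every unit vector δ ∈ V, at least one of the distances ‖δ − P₁ δ‖, ‖δ − P₂ δ‖ is ≥ sin(θ/2), where Pᵢ is the orthogonal projection onto Nᵢ; equivalently, min(‖P₁ δ‖, ‖P₂ δ‖) ≤ cos(θ/2). -/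
open scoped ComplexConjugate


private lemma stmt_2_aux {s c a b d₁ d₂ r k : ℝ} (hs : 0 < s) (hc : 0 < c)
    (hcs : c ^ 2 = 1 - s ^ 2) (hk : k = c ^ 2 - s ^ 2)
    (h1 : d₁ < s) (h2 : d₂ < s) (hd₁0 : 0 ≤ d₁) (hd₂0 : 0 ≤ d₂)
    (hpy₁ : a ^ 2 + d₁ ^ 2 = 1) (hpy₂ : b ^ 2 + d₂ ^ 2 = 1)
    (ha0 : 0 ≤ a) (hb0 : 0 ≤ b)
    (hre1 : a ^ 2 * b ^ 2 - a * d₁ * (b * d₂) ≤ r) (hre2 : r ≤ k * (a * b)) :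
    False := by
  have hac : c < a := by nlinarith
  have hbc : c < b := by nlinarith
  have ha : 0 < a := lt_trans hc hac
  have hb : 0 < b := lt_trans hc hbc
  have hab : 0 < a * b := mul_pos ha hb
  have hd : d₁ * d₂ < s ^ 2 := by nlinarith
  have habgt : c ^ 2 < a * b := by nlinarith
  nlinarith [mul_lt_mul_of_pos_left hd hab, mul_lt_mul_of_pos_left habgt hab]

/-- If the angle between subspaces `N₁, N₂` is at least `θ` (in the sense that
`|⟪x, y⟫| ≤ cos θ` for all unit `x ∈ N₁`, `y ∈ N₂`), then every unit vector `δ` is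
at distance at least `sin(θ/2)` from at least one of `N₁, N₂`. -/
theorem stmt_2 {V : Type*} [NormedAddCommGroup V] [InnerProductSpace ℂ V]
    [FiniteDimensional ℂ V]
    (N₁ N₂ : Submodule ℂ V)
    (θ : ℝ) (hθ0 : 0 < θ) (hθ1 : θ ≤ Real.pi / 2)
    (hangle : ∀ x ∈ N₁, ∀ y ∈ N₂, ‖x‖ = 1 → ‖y‖ = 1 →
      ‖(inner ℂ x y : ℂ)‖ ≤ Real.cos θ)
    (δ : V) (hδ : ‖δ‖ = 1) :
    Real.sin (θ / 2) ≤ ‖δ - (↑(Submodule.orthogonalProjectionOnto N₁ δ) : V)‖ ∨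
      Real.sin (θ / 2) ≤ ‖δ - (↑(Submodule.orthogonalProjectionOnto N₂ δ) : V)‖ := by
  by_contra hcon
  push_neg at hcon
  obtain ⟨h1, h2⟩ := hcon
  have hπ := Real.pi_pos
  set s := Real.sin (θ / 2) with hsdef
  set c := Real.cos (θ / 2) with hcdef
  have hs : 0 < s := Real.sin_pos_of_pos_of_lt_pi (by linarith) (by linarith)
  have hc : 0 < c := Real.cos_pos_of_mem_Ioo ⟨by linarith, by linarith⟩
  have hcs : c ^ 2 = 1 - s ^ 2 := Real.cos_sq' (θ / 2)
  have hcosθ : Real.cos θ = c ^ 2 - s ^ 2 := by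
    have h2 : Real.cos (2 * (θ / 2)) = 2 * c ^ 2 - 1 := Real.cos_two_mul (θ / 2)
    rw [show 2 * (θ / 2) = θ by ring] at h2
    linarith
  set p₁ : V := (Submodule.orthogonalProjectionOnto N₁ δ : V) with hp₁def
  set p₂ : V := (Submodule.orthogonalProjectionOnto N₂ δ : V) with hp₂def
  set d₁ := ‖δ - p₁‖ with hd₁def
  set d₂ := ‖δ - p₂‖ with hd₂def
  set a := ‖p₁‖ with hadef
  set b := ‖p₂‖ with hbdef
  have hd₁0 : 0 ≤ d₁ := norm_nonneg _
  have hd₂0 : 0 ≤ d₂ := norm_nonneg _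
  have ha0 : 0 ≤ a := norm_nonneg _
  have hb0 : 0 ≤ b := norm_nonneg _
  -- orthogonality
  have ho₁ : (inner ℂ p₁ (δ - p₁) : ℂ) = 0 := by
    rw [inner_eq_zero_symm]
    exact Submodule.starProjection_inner_eq_zero δ p₁ (Submodule.orthogonalProjectionOnto N₁ δ).2
  have ho₂ : (inner ℂ p₂ (δ - p₂) : ℂ) = 0 := by
    rw [inner_eq_zero_symm]
    exact Submodule.starProjection_inner_eq_zero δ p₂ (Submodule.orthogonalProjectionOnto N₂ δ).2
  -- inner ℂ pᵢ δ = ‖pᵢ‖²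
  have hip₁ : (inner ℂ p₁ δ : ℂ) = ((a : ℝ) : ℂ) ^ 2 := by
    have h := inner_add_right (𝕜 := ℂ) p₁ p₁ (δ - p₁)
    rw [show p₁ + (δ - p₁) = δ by abel, ho₁, add_zero,
      inner_self_eq_norm_sq_to_K] at h
    exact_mod_cast h
  have hip₂ : (inner ℂ p₂ δ : ℂ) = ((b : ℝ) : ℂ) ^ 2 := by
    have h := inner_add_right (𝕜 := ℂ) p₂ p₂ (δ - p₂)
    rw [show p₂ + (δ - p₂) = δ by abel, ho₂, add_zero,
      inner_self_eq_norm_sq_to_K] at h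
    exact_mod_cast h
  have hip₁' : (inner ℂ δ p₁ : ℂ) = ((a : ℝ) : ℂ) ^ 2 := by
    rw [← inner_conj_symm, hip₁]; simp [← Complex.ofReal_pow]
  have hip₂' : (inner ℂ δ p₂ : ℂ) = ((b : ℝ) : ℂ) ^ 2 := by
    rw [← inner_conj_symm, hip₂]; simp [← Complex.ofReal_pow]
  -- Pythagoras
  have hpy₁ : a ^ 2 + d₁ ^ 2 = 1 := by
    have h := norm_add_sq (𝕜 := ℂ) p₁ (δ - p₁)
    rw [show p₁ + (δ - p₁) = δ by abel, hδ, ho₁] at h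
    simp at h
    linarith
  have hpy₂ : b ^ 2 + d₂ ^ 2 = 1 := by
    have h := norm_add_sq (𝕜 := ℂ) p₂ (δ - p₂)
    rw [show p₂ + (δ - p₂) = δ by abel, hδ, ho₂] at h
    simp at h
    linarith
  have hac : c < a := by nlinarith
  have hbc : c < b := by nlinarith
  have ha : 0 < a := lt_trans hc hac
  have hb : 0 < b := lt_trans hc hbc
  -- angle bound for the projections
  have hab : ‖(inner ℂ p₁ p₂ : ℂ)‖ ≤ Real.cos θ * (a * b) := by
    set x : V := ((a⁻¹ : ℝ) : ℂ) • p₁ with hxdef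
    set y : V := ((b⁻¹ : ℝ) : ℂ) • p₂ with hydef
    have hxm : x ∈ N₁ := N₁.smul_mem _ (Submodule.orthogonalProjectionOnto N₁ δ).2
    have hym : y ∈ N₂ := N₂.smul_mem _ (Submodule.orthogonalProjectionOnto N₂ δ).2
    have hxn : ‖x‖ = 1 := by
      rw [hxdef, norm_smul, Complex.norm_real, Real.norm_eq_abs,
        abs_of_pos (inv_pos.2 ha)]
      exact inv_mul_cancel₀ ha.ne'
    have hyn : ‖y‖ = 1 := by
      rw [hydef, norm_smul, Complex.norm_real, Real.norm_eq_abs,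
        abs_of_pos (inv_pos.2 hb)]
      exact inv_mul_cancel₀ hb.ne'
    have h := hangle x hxm y hym hxn hyn
    rw [hxdef, hydef, inner_smul_left, inner_smul_right, Complex.conj_ofReal] at h
    rw [norm_mul, norm_mul] at h
    simp only [Complex.norm_real, Real.norm_eq_abs, abs_of_pos (inv_pos.2 ha),
      abs_of_pos (inv_pos.2 hb)] at h
    have := mul_le_mul_of_nonneg_left h (by positivity : (0:ℝ) ≤ a * b)
    calc ‖(inner ℂ p₁ p₂ : ℂ)‖ = a * b * (a⁻¹ * (b⁻¹ * ‖(inner ℂ p₁ p₂ : ℂ)‖)) := by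
          field_simp
      _ ≤ a * b * Real.cos θ := this
      _ = Real.cos θ * (a * b) := by ring
  -- decomposition
  set u : V := p₁ - (((a : ℝ) : ℂ) ^ 2) • δ with hudef
  set v : V := p₂ - (((b : ℝ) : ℂ) ^ 2) • δ with hvdef
  have hun : ‖u‖ = a * d₁ := by
    have h := norm_sub_sq (𝕜 := ℂ) p₁ ((((a : ℝ) : ℂ) ^ 2) • δ)
    rw [inner_smul_right, hip₁] at h
    rw [norm_smul, hδ] at h
    simp [← Complex.ofReal_pow] at h
    have h2 : ‖u‖ ^ 2 = (a * d₁) ^ 2 := by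
      rw [hudef, ← Complex.ofReal_pow, Complex.coe_smul, h]
      linear_combination (-(a : ℝ) ^ 2) * hpy₁
    exact (sq_eq_sq₀ (norm_nonneg u) (by positivity)).mp h2
  have hvn : ‖v‖ = b * d₂ := by
    have h := norm_sub_sq (𝕜 := ℂ) p₂ ((((b : ℝ) : ℂ) ^ 2) • δ)
    rw [inner_smul_right, hip₂] at h
    rw [norm_smul, hδ] at h
    simp [← Complex.ofReal_pow] at h
    have h2 : ‖v‖ ^ 2 = (b * d₂) ^ 2 := by
      rw [hvdef, ← Complex.ofReal_pow, Complex.coe_smul, h]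
      linear_combination (-(b : ℝ) ^ 2) * hpy₂
    exact (sq_eq_sq₀ (norm_nonneg v) (by positivity)).mp h2
  have hδδ : (inner ℂ δ δ : ℂ) = 1 := by
    rw [inner_self_eq_norm_sq_to_K, hδ]; simp
  have hdecomp : (inner ℂ u v : ℂ)
      = inner ℂ p₁ p₂ - ((a : ℝ) : ℂ) ^ 2 * ((b : ℝ) : ℂ) ^ 2 := by
    simp only [hudef, hvdef, inner_sub_left, inner_sub_right, inner_smul_left,
      inner_smul_right, hip₁, hip₂, hip₁', hip₂', hδδ, map_pow, Complex.conj_ofReal]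
    ring
  have hkey : (inner ℂ p₁ p₂ : ℂ) = inner ℂ u v + ((a ^ 2 * b ^ 2 : ℝ) : ℂ) := by
    rw [hdecomp]
    push_cast
    ring
  have hre0 : Complex.re (inner ℂ p₁ p₂ : ℂ)
      = Complex.re (inner ℂ u v : ℂ) + a ^ 2 * b ^ 2 := by
    rw [hkey, Complex.add_re, Complex.ofReal_re]
  have hre1 : a ^ 2 * b ^ 2 - a * d₁ * (b * d₂) ≤ Complex.re (inner ℂ p₁ p₂ : ℂ) := by
    have h1 : -(‖u‖ * ‖v‖) ≤ Complex.re (inner ℂ u v : ℂ) := by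
      have h2 : ‖(inner ℂ u v : ℂ)‖ ≤ ‖u‖ * ‖v‖ := by
        simpa using norm_inner_le_norm (𝕜 := ℂ) u v
      have h3 := abs_le.mp (Complex.abs_re_le_norm (inner ℂ u v : ℂ))
      linarith [h3.1]
    rw [hre0]
    rw [hun, hvn] at h1
    linarith
  have hre2 : Complex.re (inner ℂ p₁ p₂ : ℂ) ≤ Real.cos θ * (a * b) := by
    calc Complex.re (inner ℂ p₁ p₂ : ℂ) ≤ ‖(inner ℂ p₁ p₂ : ℂ)‖ :=
          Complex.re_le_norm _
      _ ≤ Real.cos θ * (a * b) := by exact hab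
  exact stmt_2_aux hs hc hcs hcosθ h1 h2 hd₁0 hd₂0 hpy₁ hpy₂ ha0 hb0 hre1 hre2
end

section
/- For T ≥ 1, let A be the clock matrix. Then for every vector v : Fin (T+1) → ℝ with Σ_{t=0}^T v t = 0, one has v ⬝ᵥ (A.mulVec v) ≥ (1/(2(T+1)²)) · Σ_{t=0}^T (v t)²; i.e. the second smallest eigenvalue of A is at least 1/(2(T+1)²). -/
open Matrix BigOperators

/-- The `(T+1) × (T+1)` clock matrix: `1` on the interior diagonal, `1/2` at the two
diagonal corners, `-1/2` on the off-diagonals adjacent to the diagonal, `0` elsewhere. -/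
noncomputable def clockMatrix (T : ℕ) : Matrix (Fin (T + 1)) (Fin (T + 1)) ℝ :=
  fun s t =>
    if s = t then (if (s : ℕ) = 0 ∨ (s : ℕ) = T then 1 / 2 else 1)
    else if (s : ℕ) = (t : ℕ) + 1 ∨ (t : ℕ) = (s : ℕ) + 1 then -(1 / 2) else 0

open Finset in
/-- The difference matrix whose rows are `e_{i+1} - e_i`. -/
noncomputable def diffG (T : ℕ) : Matrix (Fin T) (Fin (T + 1)) ℝ :=
  fun i s => (if (s : ℕ) = (i : ℕ) + 1 then 1 else 0) - (if (s : ℕ) = (i : ℕ) then 1 else 0)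

open Finset

lemma helperB (T a : ℕ) : ∑ k ∈ range T, (if a = k then (1:ℝ) else 0) = if a < T then 1 else 0 := by
  simp only [eq_comm (a := a)]
  rw [Finset.sum_ite_eq' (range T) a (fun _ => (1:ℝ))]; simp

lemma helperA (T a : ℕ) : ∑ k ∈ range T, (if a = k + 1 then (1:ℝ) else 0)
    = if 1 ≤ a ∧ a ≤ T then 1 else 0 := by
  rcases a with _ | c
  · simp
  · have h : ∀ k, (c + 1 = k + 1) = (c = k) := by intro k; simp
    simp only [h]
    rw [helperB]
    have h2 : c < T ↔ 1 ≤ c + 1 ∧ c + 1 ≤ T := by omega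
    simp only [h2]

lemma entry_sum (T a b : ℕ) (ha : a ≤ T) (hb : b ≤ T) (hT : 1 ≤ T) :
    ∑ k ∈ range T, ((if a = k+1 then (1:ℝ) else 0) - (if a = k then 1 else 0)) *
      ((if b = k+1 then (1:ℝ) else 0) - (if b = k then 1 else 0)) =
    if a = b then (if a = 0 ∨ a = T then 1 else 2)
    else if a = b + 1 ∨ b = a + 1 then -1 else 0 := by
  by_cases hab : a = b
  · subst hab
    have hcong : ∀ k ∈ range T, ((if a = k+1 then (1:ℝ) else 0) - (if a = k then 1 else 0)) *
        ((if a = k+1 then (1:ℝ) else 0) - (if a = k then 1 else 0))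
        = (if a = k + 1 then (1:ℝ) else 0) + (if a = k then 1 else 0) := by
      intro k _
      by_cases h1 : a = k + 1 <;> by_cases h2 : a = k <;>
        simp [h1, h2] <;> first | ring1 | omega | (exfalso; omega)
    rw [Finset.sum_congr rfl hcong, Finset.sum_add_distrib, helperA, helperB, if_pos rfl]
    split_ifs <;> norm_num <;> omega
  · by_cases h2 : a = b + 1
    · have hcong : ∀ k ∈ range T, ((if a = k+1 then (1:ℝ) else 0) - (if a = k then 1 else 0)) *
          ((if b = k+1 then (1:ℝ) else 0) - (if b = k then 1 else 0))
          = -(if b = k then (1:ℝ) else 0) := by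
        intro k _
        by_cases e1 : a = k + 1 <;> by_cases e2 : a = k <;> by_cases e3 : b = k + 1 <;>
          by_cases e4 : b = k <;> simp [e1, e2, e3, e4] <;> first | ring1 | omega | (exfalso; omega)
      rw [Finset.sum_congr rfl hcong, Finset.sum_neg_distrib, helperB]
      have : b < T := by omega
      simp [this, hab, h2]
    · by_cases h3 : b = a + 1
      · have hcong : ∀ k ∈ range T, ((if a = k+1 then (1:ℝ) else 0) - (if a = k then 1 else 0)) *
            ((if b = k+1 then (1:ℝ) else 0) - (if b = k then 1 else 0))
            = -(if a = k then (1:ℝ) else 0) := by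
          intro k _
          by_cases e1 : a = k + 1 <;> by_cases e2 : a = k <;> by_cases e3 : b = k + 1 <;>
            by_cases e4 : b = k <;> simp [e1, e2, e3, e4] <;> first | ring1 | omega | (exfalso; omega)
        rw [Finset.sum_congr rfl hcong, Finset.sum_neg_distrib, helperB]
        have : a < T := by omega
        simp [this, hab, h2, h3]
      · have hcong : ∀ k ∈ range T, ((if a = k+1 then (1:ℝ) else 0) - (if a = k then 1 else 0)) *
            ((if b = k+1 then (1:ℝ) else 0) - (if b = k then 1 else 0)) = 0 := by
          intro k _
          by_cases e1 : a = k + 1 <;> by_cases e2 : a = k <;> by_cases e3 : b = k + 1 <;>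
            by_cases e4 : b = k <;> simp [e1, e2, e3, e4] <;> first | ring1 | omega | (exfalso; omega)
        rw [Finset.sum_congr rfl hcong]
        simp [hab, h2, h3]

lemma clock_eq (T : ℕ) (hT : 1 ≤ T) :
    clockMatrix T = (1/2 : ℝ) • ((diffG T)ᵀ * diffG T) := by
  ext s t
  have hsum : ∑ i : Fin T, diffG T i s * diffG T i t
      = ∑ k ∈ range T, ((if (s:ℕ) = k+1 then (1:ℝ) else 0) - (if (s:ℕ) = k then 1 else 0)) *
        ((if (t:ℕ) = k+1 then (1:ℝ) else 0) - (if (t:ℕ) = k then 1 else 0)) := by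
    rw [← Fin.sum_univ_eq_sum_range]
    rfl
  have ha : (s:ℕ) ≤ T := Nat.lt_succ_iff.mp s.isLt
  have hb : (t:ℕ) ≤ T := Nat.lt_succ_iff.mp t.isLt
  have h := entry_sum T (s:ℕ) (t:ℕ) ha hb hT
  simp only [Matrix.smul_apply, Matrix.mul_apply, Matrix.transpose_apply, smul_eq_mul]
  rw [hsum, h]
  simp only [clockMatrix, Fin.ext_iff]
  split_ifs <;> norm_num

lemma mulVec_diffG (T : ℕ) (v : Fin (T+1) → ℝ) (i : Fin T) :
    (diffG T).mulVec v i = v i.succ - v i.castSucc := by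
  have h1 : ∀ s : Fin (T+1), ((s:ℕ) = (i:ℕ) + 1) = (s = i.succ) := by
    intro s; simp [Fin.ext_iff]
  have h2 : ∀ s : Fin (T+1), ((s:ℕ) = (i:ℕ)) = (s = i.castSucc) := by
    intro s; simp [Fin.ext_iff]
  simp only [Matrix.mulVec, dotProduct, diffG, h1, h2, sub_mul, ite_mul, one_mul, zero_mul,
    Finset.sum_sub_distrib]
  rw [Finset.sum_ite_eq' Finset.univ i.succ v, Finset.sum_ite_eq' Finset.univ i.castSucc v]
  simp

lemma quad_form (T : ℕ) (hT : 1 ≤ T) (v : Fin (T+1) → ℝ) :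
    v ⬝ᵥ (clockMatrix T).mulVec v = (1/2) * ∑ i : Fin T, (v i.succ - v i.castSucc)^2 := by
  rw [clock_eq T hT, Matrix.smul_mulVec, dotProduct_smul, smul_eq_mul]
  congr 1
  rw [← Matrix.mulVec_mulVec, Matrix.dotProduct_mulVec, Matrix.vecMul_transpose]
  simp only [dotProduct, mulVec_diffG]
  exact Finset.sum_congr rfl fun i _ => by rw [sq]

/-- The second smallest eigenvalue of the clock matrix is at least `1/(2(T+1)²)`:
for every vector `v` orthogonal to the constant vectors (i.e. with `∑ t, v t = 0`),
`vᵀ A v ≥ (1/(2(T+1)²)) ‖v‖²`. -/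
theorem stmt_5 (T : ℕ) (hT : 1 ≤ T) (v : Fin (T + 1) → ℝ)
    (hv : ∑ t, v t = 0) :
    (1 / (2 * ((T : ℝ) + 1) ^ 2)) * ∑ t, v t ^ 2 ≤ v ⬝ᵥ (clockMatrix T).mulVec v := by
  rw [quad_form T hT v]
  set D := ∑ i : Fin T, (v i.succ - v i.castSucc)^2 with hDdef
  set S := ∑ t, v t ^ 2 with hSdef
  have hDnn : 0 ≤ D := Finset.sum_nonneg fun _ _ => sq_nonneg _
  have hSnn : 0 ≤ S := Finset.sum_nonneg fun _ _ => sq_nonneg _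
  set w : ℕ → ℝ := fun n => if h : n < T + 1 then v ⟨n, h⟩ else 0 with hwdef
  have hw : ∀ s : Fin (T+1), w (s:ℕ) = v s := by
    intro s; simp [hwdef, s.isLt]; intro h; exact absurd s.isLt (by omega)
  have hDw : D = ∑ k ∈ range T, (w (k+1) - w k)^2 := by
    rw [hDdef, ← Fin.sum_univ_eq_sum_range (fun k => (w (k+1) - w k)^2) T]
    refine Finset.sum_congr rfl fun i _ => ?_
    have e1 : w ((i:ℕ)+1) = v i.succ := by rw [← hw i.succ]; rfl
    have e2 : w (i:ℕ) = v i.castSucc := by rw [← hw i.castSucc]; rfl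
    rw [e1, e2]
  have key : ∀ a b : ℕ, a ≤ b → b ≤ T → (w b - w a)^2 ≤ T * D := by
    intro a b hab hbT
    have tel : w b - w a = ∑ k ∈ Finset.Ico a b, (w (k+1) - w k) := by
      rw [Finset.sum_Ico_eq_sub _ hab, Finset.sum_range_sub, Finset.sum_range_sub]
      ring
    rw [tel]
    calc (∑ k ∈ Finset.Ico a b, (w (k+1) - w k))^2
        ≤ (Finset.Ico a b).card * ∑ k ∈ Finset.Ico a b, (w (k+1) - w k)^2 :=
          sq_sum_le_card_mul_sum_sq
      _ ≤ T * D := by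
          have hcard : ((Finset.Ico a b).card : ℝ) ≤ (T : ℝ) := by
            rw [Nat.card_Ico]; exact_mod_cast Nat.le_trans (Nat.sub_le b a) hbT
          have hsub : ∑ k ∈ Finset.Ico a b, (w (k+1) - w k)^2 ≤ D := by
            rw [hDw]
            refine Finset.sum_le_sum_of_subset_of_nonneg ?_ (fun _ _ _ => sq_nonneg _)
            intro k hk
            simp only [Finset.mem_Ico] at hk
            simp only [Finset.mem_range]
            omega
          have h0 : 0 ≤ ∑ k ∈ Finset.Ico a b, (w (k+1) - w k)^2 :=
            Finset.sum_nonneg fun _ _ => sq_nonneg _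
          exact mul_le_mul hcard hsub h0 (by positivity)
  have keyF : ∀ s t : Fin (T+1), (v s - v t)^2 ≤ T * D := by
    intro s t
    rcases le_total (s:ℕ) (t:ℕ) with h | h
    · have := key (s:ℕ) (t:ℕ) h (Nat.lt_succ_iff.mp t.isLt)
      rw [hw, hw] at this
      calc (v s - v t)^2 = (v t - v s)^2 := by ring
        _ ≤ T * D := this
    · have := key (t:ℕ) (s:ℕ) h (Nat.lt_succ_iff.mp s.isLt)
      rw [hw, hw] at this
      exact this
  have expand : ∑ s : Fin (T+1), ∑ t : Fin (T+1), (v s - v t)^2 = 2*((T:ℝ)+1)*S := by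
    have hinner : ∀ s : Fin (T+1), ∑ t : Fin (T+1), (v s - v t)^2 = ((T:ℝ)+1) * v s^2 + S := by
      intro s
      have : ∀ t : Fin (T+1), (v s - v t)^2 = v s^2 - 2 * v s * v t + v t ^2 := by
        intro t; ring
      rw [Finset.sum_congr rfl fun t _ => this t]
      rw [Finset.sum_add_distrib, Finset.sum_sub_distrib, ← Finset.mul_sum, hv,
        Finset.sum_const, Finset.card_univ, Fintype.card_fin]
      push_cast
      ring
    rw [Finset.sum_congr rfl fun s _ => hinner s, Finset.sum_add_distrib, Finset.sum_const,
      Finset.card_univ, Fintype.card_fin, ← Finset.mul_sum, ← hSdef]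
    push_cast
    ring
  have hbound : 2*((T:ℝ)+1)*S ≤ ((T:ℝ)+1)^2 * ((T:ℝ) * D) := by
    rw [← expand]
    calc ∑ s : Fin (T+1), ∑ t : Fin (T+1), (v s - v t)^2
        ≤ ∑ _s : Fin (T+1), ∑ _t : Fin (T+1), (T:ℝ) * D := by
          refine Finset.sum_le_sum fun s _ => Finset.sum_le_sum fun t _ => keyF s t
      _ = ((T:ℝ)+1)^2 * ((T:ℝ) * D) := by
          simp [Finset.sum_const, Finset.card_univ]
          push_cast
          ring
  have hT1 : (1:ℝ) ≤ (T:ℝ) := by exact_mod_cast hT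
  have hS_le : S ≤ ((T:ℝ)+1)^2 * D := by nlinarith [sq_nonneg ((T:ℝ)+1), hDnn]
  calc (1 / (2 * ((T : ℝ) + 1) ^ 2)) * S
      ≤ (1 / (2 * ((T : ℝ) + 1) ^ 2)) * (((T:ℝ)+1)^2 * D) := by
        apply mul_le_mul_of_nonneg_left hS_le (by positivity)
    _ = 1/2 * D := by field_simp
end

section
/- Let V be a finite-dimensional complex inner product space, let Π_in and Π_acc be orthogonal projections on V, let U : V → V be unitary, and let ε ≥ 0. Suppose that every unit vector v with Π_in v = v satisfies ‖Π_acc (U v)‖² ≤ ε. Then every unit vector γ ∈ V satisfies ‖Π_in γ‖² + ‖Π_acc (U γ)‖² ≤ 1 + ε + 2√ε. -/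
open scoped ComplexInnerProductSpace in
private lemma proj_norm_le_aux {V : Type*} [NormedAddCommGroup V] [InnerProductSpace ℂ V]
    (P : V →ₗ[ℂ] V) (hsa : P.IsSymmetric) (hproj : P ∘ₗ P = P) (x : V) :
    ‖P x‖ ≤ ‖x‖ := by
  have hPP : P (P x) = P x := DFunLike.congr_fun hproj x
  have h1 : (inner ℂ (P x) (P x) : ℂ) = inner ℂ x (P x) := by
    rw [hsa x (P x), hPP]
  have h2 : (‖P x‖ : ℝ)^2 = RCLike.re (K := ℂ) (inner ℂ x (P x)) := by
    rw [← h1, inner_self_eq_norm_sq]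
  have h3 : RCLike.re (K := ℂ) (inner ℂ x (P x)) ≤ ‖(inner ℂ x (P x) : ℂ)‖ := RCLike.re_le_norm _
  have h4 : ‖(inner ℂ x (P x) : ℂ)‖ ≤ ‖x‖ * ‖P x‖ := norm_inner_le_norm x (P x)
  nlinarith [norm_nonneg (P x), norm_nonneg x]

/-- If every unit vector `v` fixed by the orthogonal projection `Π_in` satisfies
`‖Π_acc (U v)‖² ≤ ε` (with `U` unitary), then every unit vector `γ` satisfies
`‖Π_in γ‖² + ‖Π_acc (U γ)‖² ≤ 1 + ε + 2√ε`. -/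
theorem stmt_10 {V : Type*} [NormedAddCommGroup V] [InnerProductSpace ℂ V]
    [FiniteDimensional ℂ V]
    (Pin Pacc : V →ₗ[ℂ] V)
    (hin_sa : Pin.IsSymmetric) (hin_proj : Pin ∘ₗ Pin = Pin)
    (hacc_sa : Pacc.IsSymmetric) (hacc_proj : Pacc ∘ₗ Pacc = Pacc)
    (U : V ≃ₗᵢ[ℂ] V) (ε : ℝ) (hε : 0 ≤ ε)
    (h : ∀ v : V, ‖v‖ = 1 → Pin v = v → ‖Pacc (U v)‖ ^ 2 ≤ ε)
    (γ : V) (hγ : ‖γ‖ = 1) :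
    ‖Pin γ‖ ^ 2 + ‖Pacc (U γ)‖ ^ 2 ≤ 1 + ε + 2 * Real.sqrt ε := by
  set a : ℝ := ‖Pin γ‖ with ha
  set b : ℝ := ‖γ - Pin γ‖ with hb
  have ha0 : 0 ≤ a := norm_nonneg _
  have hb0 : 0 ≤ b := norm_nonneg _
  have hsqrt : 0 ≤ Real.sqrt ε := Real.sqrt_nonneg ε
  have hsq : Real.sqrt ε ^ 2 = ε := Real.sq_sqrt hε
  have hPP : Pin (Pin γ) = Pin γ := DFunLike.congr_fun hin_proj γ
  -- orthogonality: a^2 + b^2 = 1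
  have horth : (inner ℂ (Pin γ) (γ - Pin γ) : ℂ) = 0 := by
    rw [inner_sub_right, hin_sa γ γ, hin_sa γ (Pin γ), hPP, sub_self]
  have hpyth : a ^ 2 + b ^ 2 = 1 := by
    have := norm_add_sq_eq_norm_sq_add_norm_sq_of_inner_eq_zero (Pin γ) (γ - Pin γ) horth
    have h' : Pin γ + (γ - Pin γ) = γ := by abel
    rw [h'] at this
    rw [hγ, one_mul] at this
    rw [ha, hb]
    nlinarith [this]
  have ha1 : a ≤ 1 := by nlinarith
  have hb1 : b ≤ 1 := by nlinarith
  -- bound ‖Pacc (U (Pin γ))‖ ≤ a * sqrt ε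
  have key : ‖Pacc (U (Pin γ))‖ ≤ a * Real.sqrt ε := by
    rcases eq_or_lt_of_le ha0 with hz | hpos
    · have : Pin γ = 0 := by
        rw [← norm_eq_zero]; exact hz.symm
      simp [this, ← hz]
    · set v : V := (a : ℂ)⁻¹ • Pin γ with hv
      have hvnorm : ‖v‖ = 1 := by
        rw [hv, norm_smul]
        simp only [norm_inv, Complex.norm_real, Real.norm_eq_abs, abs_of_pos hpos]
        field_simp
        exact ha.symm
      have hvfix : Pin v = v := by
        rw [hv, map_smul, hPP]
      have hv2 : ‖Pacc (U v)‖ ^ 2 ≤ ε := h v hvnorm hvfix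
      have hv3 : ‖Pacc (U v)‖ ≤ Real.sqrt ε := by
        nlinarith [norm_nonneg (Pacc (U v)), Real.sqrt_nonneg ε, Real.sq_sqrt hε]
      have heq : Pacc (U (Pin γ)) = (a : ℂ) • Pacc (U v) := by
        rw [hv, map_smul, map_smul, smul_smul]
        rw [mul_inv_cancel₀ (by exact_mod_cast hpos.ne')]
        simp
      rw [heq, norm_smul]
      simp only [Complex.norm_real, Real.norm_eq_abs, abs_of_pos hpos]
      exact mul_le_mul_of_nonneg_left hv3 ha0
  -- bound ‖Pacc (U γ)‖
  have hrest : ‖Pacc (U (γ - Pin γ))‖ ≤ b := by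
    calc ‖Pacc (U (γ - Pin γ))‖ ≤ ‖U (γ - Pin γ)‖ :=
          proj_norm_le_aux Pacc hacc_sa hacc_proj _
      _ = b := U.norm_map _
  have hsplit : ‖Pacc (U γ)‖ ≤ a * Real.sqrt ε + b := by
    have : Pacc (U γ) = Pacc (U (Pin γ)) + Pacc (U (γ - Pin γ)) := by
      rw [← map_add, ← map_add]
      congr 1
      congr 1
      abel
    rw [this]
    exact le_trans (norm_add_le _ _) (add_le_add key hrest)
  have hPnn : 0 ≤ ‖Pacc (U γ)‖ := norm_nonneg _
  have hfinal : ‖Pacc (U γ)‖ ^ 2 ≤ (a * Real.sqrt ε + b) ^ 2 := by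
    nlinarith
  nlinarith [mul_nonneg ha0 hb0, mul_nonneg ha0 hsqrt]
end
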